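/- arXiv:2210.09047 — 2 statements merged into one kernel-verified Lean document; each statement's English description precedes it below -/
import Mathlib

section
/- Let X be a real random variable with finite expectation whose cumulative distribution function F is continuous. Then the mapping s ↦ Δ_s(X) is nonincreasing on (−1,∞) (taking values in [0,∞]), Δ_s(X) → 0 as s → ∞, and Δ_s(X) → E[X] − ess inf X as s → −1+, where the limit equals +∞ when X is not essentially bounded below. -/
/-!
For `u ∈ [0, 1]` the integrand `u (1 - u ^ s) / s` is `-u` times the difference quotient at `0`
of the convex function `s ↦ u ^ s`, hence antitone in `s`; monotone convergence then makes
`Δ` right-continuous at `-1`. With Lean's `0 ^ (-1) = 0`, the integrand at `s = -1` is `1 - F`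
on `{F > 0}` and `0` elsewhere. If `m` is the essential infimum of `X` then `{F > 0}` is `(m, ∞)`
up to a point, and the layer-cake formula turns `∫_m^∞ (1 - F)` into `E[X] - m`; if `X` is not
essentially bounded below, `F > 0` everywhere while `1 - F` stays away from `0` near `-∞`.
As `s → ∞` the integrand is at most `1 / s` and is dominated by `F (1 - F)`, whose integral is
at most `E|X|`, again by the layer-cake formula.
-/

open MeasureTheory Set Filter Topology ProbabilityTheory
open scoped ENNReal

noncomputable def tsallisIntegrand (s u : ℝ) : ℝ :=
  if s = 0 then -(u * Real.log u) else 1 / s * (u * (1 - u ^ s))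

noncomputable def cumulativeTsallisEntropy (ν : Measure ℝ) (s : ℝ) : ℝ≥0∞ :=
  ∫⁻ x, ENNReal.ofReal (tsallisIntegrand s (cdf ν x))

theorem ConvexOn.monotone_dslope {f : ℝ → ℝ} {a : ℝ} (hf : ConvexOn ℝ univ f)
    (hfa : DifferentiableAt ℝ f a) : Monotone (dslope f a) := by
  intro x y hxy
  rcases eq_or_lt_of_le hxy with rfl | hxy
  · rfl
  by_cases hx : x = a
  · subst hx
    rw [dslope_same, dslope_of_ne _ hxy.ne']
    exact hf.deriv_le_slope (mem_univ _) (mem_univ _) hxy hfa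
  by_cases hy : y = a
  · subst hy
    rw [dslope_same, dslope_of_ne _ hx, slope_comm]
    exact hf.slope_le_deriv (mem_univ _) (mem_univ _) hxy hfa
  rw [dslope_of_ne _ hx, dslope_of_ne _ hy]
  exact hf.slope_mono (mem_univ a) ⟨mem_univ _, hx⟩ ⟨mem_univ _, hy⟩ hxy.le

@[simp]
theorem tsallisIntegrand_zero_right (s : ℝ) : tsallisIntegrand s 0 = 0 := by
  by_cases hs : s = 0 <;> simp [tsallisIntegrand, hs, Real.zero_rpow]

theorem tsallisIntegrand_eq_neg_mul_dslope {u : ℝ} (hu : 0 < u) (s : ℝ) :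
    tsallisIntegrand s u = -u * dslope (fun t => u ^ t) 0 s := by
  by_cases hs : s = 0
  · subst hs
    rw [dslope_same, (Real.hasStrictDerivAt_const_rpow hu 0).hasDerivAt.deriv]
    simp [tsallisIntegrand]
  · rw [dslope_of_ne _ hs, slope_def_field]
    rw [tsallisIntegrand, if_neg hs, Real.rpow_zero, sub_zero]
    ring

theorem antitone_tsallisIntegrand {u : ℝ} (hu : 0 ≤ u) : Antitone (tsallisIntegrand · u) := by
  rcases hu.eq_or_lt with rfl | hu
  · simp [antitone_const]
  intro s t hst
  simp only [tsallisIntegrand_eq_neg_mul_dslope hu]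
  exact mul_le_mul_of_nonpos_left ((convexOn_rpow_left hu).monotone_dslope
    (Real.hasStrictDerivAt_const_rpow hu 0).hasDerivAt.differentiableAt hst) (by linarith)

theorem tsallisIntegrand_le_inv {u s : ℝ} (hu0 : 0 ≤ u) (hu1 : u ≤ 1) (hs : 0 < s) :
    tsallisIntegrand s u ≤ s⁻¹ := by
  have hus : 0 ≤ u ^ s := Real.rpow_nonneg hu0 s
  rw [tsallisIntegrand, if_neg hs.ne', one_div]
  exact mul_le_of_le_one_right (inv_nonneg.2 hs.le) (by nlinarith)

theorem tsallisIntegrand_neg_one {u : ℝ} (hu : u ≠ 0) : tsallisIntegrand (-1) u = 1 - u := by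
  rw [tsallisIntegrand, if_neg (by norm_num), Real.rpow_neg_one]
  field_simp
  ring

theorem continuousAt_tsallisIntegrand {s : ℝ} (hs : s ≠ 0) (u : ℝ) :
    ContinuousAt (tsallisIntegrand · u) s := by
  have hformula : (fun t => 1 / t * (u * (1 - u ^ t))) =ᶠ[𝓝 s] (tsallisIntegrand · u) := by
    filter_upwards [eventually_ne_nhds hs] with t ht
    simp [tsallisIntegrand, ht]
  refine ContinuousAt.congr ?_ hformula
  exact (continuousAt_const.div continuousAt_id hs).mul
    (continuousAt_const.mul (continuousAt_const.sub (Real.continuousAt_const_rpow' hs)))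

theorem measurable_tsallisIntegrand (s : ℝ) : Measurable (tsallisIntegrand s) := by
  unfold tsallisIntegrand
  split_ifs <;> fun_prop

theorem tendsto_lintegral_nhdsGT_of_antitone {α : Type*} [MeasurableSpace α] {μ : Measure α}
    {f : ℝ → α → ℝ≥0∞} {g : α → ℝ≥0∞} {a : ℝ} (hf : ∀ s, AEMeasurable (f s) μ)
    (hanti : ∀ x, Antitone (f · x)) (hlim : ∀ x, Tendsto (f · x) (𝓝[>] a) (𝓝 (g x))) :
    Tendsto (fun s => ∫⁻ x, f s x ∂μ) (𝓝[>] a) (𝓝 (∫⁻ x, g x ∂μ)) := by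
  have hI : Antitone fun s => ∫⁻ x, f s x ∂μ := fun s t hst => lintegral_mono fun x => hanti x hst
  obtain ⟨u, hu_anti, -, hu⟩ := exists_seq_strictAnti_tendsto_nhdsWithin a
  have hseq : Tendsto (fun n => ∫⁻ x, f (u n) x ∂μ) atTop (𝓝 (∫⁻ x, g x ∂μ)) :=
    lintegral_tendsto_of_tendsto_of_monotone (fun n => hf (u n))
      (ae_of_all _ fun x _ _ hmn => hanti x (hu_anti.antitone hmn))
      (ae_of_all _ fun x => (hlim x).comp hu)
  have hlimI := hI.tendsto_nhdsGT a
  rwa [tendsto_nhds_unique (hlimI.comp hu) hseq] at hlimI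

theorem lintegral_Ioi_measure_Ioi (ν : Measure ℝ) (c : ℝ) :
    ∫⁻ x in Ioi c, ν (Ioi x) = ∫⁻ y, ENNReal.ofReal (y - c) ∂ν := by
  have hlayer := lintegral_eq_lintegral_meas_lt ν (f := fun y => max (y - c) 0)
    (ae_of_all _ fun _ => le_max_right _ _) (by fun_prop)
  have hshift := (measurePreserving_add_left volume c).setLIntegral_comp_emb
    (measurableEmbedding_addLeft c) (fun x => ν (Ioi x)) (Ioi 0)
  rw [image_const_add_Ioi, add_zero] at hshift
  have hpos : ∀ y, ENNReal.ofReal (max (y - c) 0) = ENNReal.ofReal (y - c) := fun y => by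
    simp
  simp only [hpos] at hlayer
  rw [← hshift, hlayer]
  refine setLIntegral_congr_fun measurableSet_Ioi fun t (ht : 0 < t) => ?_
  congr 1
  ext y
  simp [ht.not_gt, lt_sub_iff_add_lt']

theorem lintegral_Iic_measure_Iic (ν : Measure ℝ) (c : ℝ) :
    ∫⁻ x in Iic c, ν (Iic x) = ∫⁻ y, ENNReal.ofReal (c - y) ∂ν := by
  have hlayer := lintegral_eq_lintegral_meas_le ν (f := fun y => max (c - y) 0)
    (ae_of_all _ fun _ => le_max_right _ _) (by fun_prop)
  have hreflect := (Measure.measurePreserving_sub_left volume c).setLIntegral_comp_emb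
    (measurableEmbedding_subLeft c) (fun x => ν (Iic x)) (Ioi 0)
  rw [image_const_sub_Ioi, sub_zero] at hreflect
  have hpos : ∀ y, ENNReal.ofReal (max (c - y) 0) = ENNReal.ofReal (c - y) := fun y => by
    simp
  simp only [hpos] at hlayer
  rw [setLIntegral_congr Iio_ae_eq_Iic.symm, ← hreflect, hlayer]
  refine setLIntegral_congr_fun measurableSet_Ioi fun t (ht : 0 < t) => ?_
  congr 1
  ext y
  simp [ht.not_ge, le_sub_comm]

section Law

variable (ν : Measure ℝ)

theorem antitone_cumulativeTsallisEntropy : Antitone (cumulativeTsallisEntropy ν) :=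
  fun _ _ hst => lintegral_mono fun x =>
    ENNReal.ofReal_le_ofReal (antitone_tsallisIntegrand (cdf_nonneg ν x) hst)

theorem measurable_ofReal_tsallisIntegrand_cdf (s : ℝ) :
    Measurable fun x => ENNReal.ofReal (tsallisIntegrand s (cdf ν x)) :=
  ((measurable_tsallisIntegrand s).comp (monotone_cdf ν).measurable).ennreal_ofReal

theorem tendsto_cumulativeTsallisEntropy_nhdsGT {a : ℝ} (ha : a ≠ 0) :
    Tendsto (cumulativeTsallisEntropy ν) (𝓝[>] a) (𝓝 (cumulativeTsallisEntropy ν a)) :=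
  tendsto_lintegral_nhdsGT_of_antitone
    (fun s => (measurable_ofReal_tsallisIntegrand_cdf ν s).aemeasurable)
    (fun x _ _ hst => ENNReal.ofReal_le_ofReal (antitone_tsallisIntegrand (cdf_nonneg ν x) hst))
    (fun x => (ENNReal.continuous_ofReal.continuousAt.comp
      (continuousAt_tsallisIntegrand ha (cdf ν x))).tendsto.mono_left nhdsWithin_le_nhds)

variable [IsProbabilityMeasure ν]

theorem ofReal_one_sub_cdf (x : ℝ) : ENNReal.ofReal (1 - cdf ν x) = ν (Ioi x) := by
  rw [← compl_Iic, prob_compl_eq_one_sub measurableSet_Iic, ← ofReal_cdf,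
    ENNReal.ofReal_sub _ (cdf_nonneg ν x), ENNReal.ofReal_one]

theorem cdf_eq_zero_iff (x : ℝ) : cdf ν x = 0 ↔ ∀ᵐ y ∂ν, x < y := by
  calc cdf ν x = 0 ↔ ENNReal.ofReal (cdf ν x) = 0 := by
        rw [ENNReal.ofReal_eq_zero]
        exact ⟨le_of_eq, fun h => le_antisymm h (cdf_nonneg ν x)⟩
    _ ↔ ∀ᵐ y ∂ν, x < y := by
        rw [ofReal_cdf, measure_eq_zero_iff_ae_notMem]
        simp

theorem cumulativeTsallisEntropy_one_lt_top (hν : Integrable id ν) :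
    cumulativeTsallisEntropy ν 1 < ⊤ := by
  have hterm : ∀ x, tsallisIntegrand 1 (cdf ν x) = cdf ν x * (1 - cdf ν x) := fun x => by
    simp [tsallisIntegrand]
  calc cumulativeTsallisEntropy ν 1
      = (∫⁻ x in Iic 0, ENNReal.ofReal (tsallisIntegrand 1 (cdf ν x)))
        + ∫⁻ x in (Iic 0)ᶜ, ENNReal.ofReal (tsallisIntegrand 1 (cdf ν x)) :=
        (lintegral_add_compl (μ := volume) _ measurableSet_Iic).symm
    _ ≤ (∫⁻ x in Iic 0, ν (Iic x)) + ∫⁻ x in Ioi 0, ν (Ioi x) := by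
        rw [compl_Iic]
        refine add_le_add (lintegral_mono fun x => ?_) (lintegral_mono fun x => ?_)
        · rw [hterm, ← ofReal_cdf]
          exact ENNReal.ofReal_le_ofReal
            (mul_le_of_le_one_right (cdf_nonneg ν x) (by linarith [cdf_nonneg ν x]))
        · rw [hterm, ← ofReal_one_sub_cdf]
          exact ENNReal.ofReal_le_ofReal
            (mul_le_of_le_one_left (by linarith [cdf_le_one ν x]) (cdf_le_one ν x))
    _ = ∫⁻ y, ENNReal.ofReal (0 - y) ∂ν + ∫⁻ y, ENNReal.ofReal (y - 0) ∂ν := by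
        rw [lintegral_Iic_measure_Iic, lintegral_Ioi_measure_Ioi]
    _ < ⊤ := by
        simp only [zero_sub, sub_zero]
        exact ENNReal.add_lt_top.2 ⟨hν.neg.lintegral_lt_top, hν.lintegral_lt_top⟩

theorem tendsto_cumulativeTsallisEntropy_atTop (hν : Integrable id ν) :
    Tendsto (cumulativeTsallisEntropy ν) atTop (𝓝 0) := by
  have hinv : Tendsto (fun s : ℝ => ENNReal.ofReal s⁻¹) atTop (𝓝 0) := by
    simpa using ENNReal.tendsto_ofReal tendsto_inv_atTop_zero
  have hpointwise : ∀ x, Tendsto (fun s => ENNReal.ofReal (tsallisIntegrand s (cdf ν x))) atTop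
      (𝓝 0) := fun x =>
    tendsto_of_tendsto_of_tendsto_of_le_of_le' tendsto_const_nhds hinv
      (Eventually.of_forall fun _ => bot_le)
      (eventually_gt_atTop 0 |>.mono fun s hs => ENNReal.ofReal_le_ofReal
        (tsallisIntegrand_le_inv (cdf_nonneg ν x) (cdf_le_one ν x) hs))
  have hdom := tendsto_lintegral_filter_of_dominated_convergence _
    (Eventually.of_forall (measurable_ofReal_tsallisIntegrand_cdf ν))
    (eventually_ge_atTop 1 |>.mono fun s hs => ae_of_all _ fun x =>
      ENNReal.ofReal_le_ofReal (antitone_tsallisIntegrand (cdf_nonneg ν x) hs))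
    (cumulativeTsallisEntropy_one_lt_top ν hν).ne (ae_of_all _ hpointwise)
  rw [lintegral_zero] at hdom
  exact hdom

theorem ofReal_tsallisIntegrand_neg_one_cdf {x : ℝ} (hx : cdf ν x ≠ 0) :
    ENNReal.ofReal (tsallisIntegrand (-1) (cdf ν x)) = ν (Ioi x) := by
  rw [tsallisIntegrand_neg_one hx, ofReal_one_sub_cdf]

theorem cumulativeTsallisEntropy_neg_one_of_isGreatest (hν : Integrable id ν) {m : ℝ}
    (hm : IsGreatest {c | ∀ᵐ y ∂ν, c ≤ y} m) :
    cumulativeTsallisEntropy ν (-1) = ENNReal.ofReal (∫ y, y ∂ν - m) := by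
  have hm_lower : ∀ᵐ y ∂ν, m ≤ y := hm.1
  have hintegrand : ∀ x ≠ m, ENNReal.ofReal (tsallisIntegrand (-1) (cdf ν x))
      = (Ioi m).indicator (fun x => ν (Ioi x)) x := by
    intro x hxm
    rcases hxm.lt_or_gt with hxm | hmx
    · have hzero : cdf ν x = 0 :=
        (cdf_eq_zero_iff ν x).2 (hm_lower.mono fun y hy => hxm.trans_le hy)
      simp [hzero, hxm.not_gt]
    · have hpos : cdf ν x ≠ 0 := fun hzero =>
        hmx.not_ge (hm.2 ((cdf_eq_zero_iff ν x).1 hzero |>.mono fun _ hy => hy.le))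
      rw [ofReal_tsallisIntegrand_neg_one_cdf ν hpos, indicator_of_mem (mem_Ioi.2 hmx)]
  have hlower : 0 ≤ᵐ[ν] fun y => y - m := hm_lower.mono fun y hy => sub_nonneg.2 hy
  calc cumulativeTsallisEntropy ν (-1) = ∫⁻ x, (Ioi m).indicator (fun x => ν (Ioi x)) x :=
        lintegral_congr_ae ((Measure.ae_ne volume m).mono hintegrand)
    _ = ∫⁻ y, ENNReal.ofReal (y - m) ∂ν := by
        rw [lintegral_indicator measurableSet_Ioi, lintegral_Ioi_measure_Ioi]
    _ = ENNReal.ofReal (∫ y, y ∂ν - m) := by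
        have hid : Integrable (fun y => y) ν := hν
        rw [← ofReal_integral_eq_lintegral_ofReal (f := fun y => y - m)
          (hid.sub (integrable_const m)) hlower, integral_sub hid (integrable_const m)]
        simp

theorem cumulativeTsallisEntropy_neg_one_eq_top (hunb : ¬∃ c, ∀ᵐ y ∂ν, c ≤ y) :
    cumulativeTsallisEntropy ν (-1) = ⊤ := by
  have hpos : ∀ x, cdf ν x ≠ 0 := fun x hzero =>
    hunb ⟨x, (cdf_eq_zero_iff ν x).1 hzero |>.mono fun _ hy => hy.le⟩
  obtain ⟨x₀, hx₀⟩ := ((tendsto_cdf_atBot ν).eventually_lt_const zero_lt_one).exists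
  have htail : ν (Ioi x₀) ≠ 0 := by
    rw [← ofReal_one_sub_cdf]
    simpa using hx₀
  refine top_le_iff.1 ?_
  calc ⊤ = ∫⁻ _ in Iic x₀, ν (Ioi x₀) := by simp [htail]
    _ ≤ ∫⁻ x in Iic x₀, ν (Ioi x) :=
        setLIntegral_mono' measurableSet_Iic fun x hx => measure_mono (Ioi_subset_Ioi hx)
    _ ≤ ∫⁻ x, ν (Ioi x) := setLIntegral_le_lintegral _ _
    _ = cumulativeTsallisEntropy ν (-1) :=
        lintegral_congr fun x => (ofReal_tsallisIntegrand_neg_one_cdf ν (hpos x)).symm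

end Law

theorem cdf_map_eq_toReal {Ω : Type*} [MeasurableSpace Ω] {μ : Measure Ω}
    [IsProbabilityMeasure μ] {X : Ω → ℝ} (hX : AEMeasurable X μ) (x : ℝ) :
    cdf (μ.map X) x = (μ {ω | X ω ≤ x}).toReal := by
  have : IsProbabilityMeasure (μ.map X) := Measure.isProbabilityMeasure_map hX
  rw [cdf_eq_real, measureReal_def, Measure.map_apply_of_aemeasurable hX measurableSet_Iic]
  rfl

theorem cumulative_tsallis_entropy_monotone_and_limits_general
    {Ω : Type*} [MeasureSpace Ω] [IsProbabilityMeasure (volume : Measure Ω)]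
    (X : Ω → ℝ) (hXint : Integrable X)
    (F : ℝ → ℝ) (hF : ∀ x, F x = ((volume : Measure Ω) {ω | X ω ≤ x}).toReal)
    (D : ℝ → ℝ≥0∞)
    (hD0 : D 0 = ∫⁻ x : ℝ, ENNReal.ofReal (-(F x * Real.log (F x))))
    (hD : ∀ s : ℝ, s ≠ 0 → D s = ∫⁻ x : ℝ, ENNReal.ofReal ((1 / s) * (F x * (1 - F x ^ s)))) :
    AntitoneOn D (Ioi (-1 : ℝ))
    ∧ Tendsto D atTop (nhds 0)
    ∧ (∀ m : ℝ, IsGreatest {c : ℝ | ∀ᵐ ω ∂(volume : Measure Ω), c ≤ X ω} m →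
        Tendsto D (nhdsWithin (-1 : ℝ) (Ioi (-1 : ℝ)))
          (nhds (ENNReal.ofReal ((∫ ω, X ω ∂(volume : Measure Ω)) - m))))
    ∧ ((¬ ∃ c : ℝ, ∀ᵐ ω ∂(volume : Measure Ω), c ≤ X ω) →
        Tendsto D (nhdsWithin (-1 : ℝ) (Ioi (-1 : ℝ))) (nhds ⊤)) := by
  have hX := hXint.aemeasurable
  set ν := (volume : Measure Ω).map X
  have : IsProbabilityMeasure ν := Measure.isProbabilityMeasure_map hX
  have hν : Integrable id ν := (integrable_map_measure aestronglyMeasurable_id hX).2 hXint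
  have hlaw : ∀ c, (∀ᵐ y ∂ν, c ≤ y) ↔ ∀ᵐ ω, c ≤ X ω := fun c => ae_map_iff hX measurableSet_Ici
  have hmean : ∫ y, y ∂ν = ∫ ω, X ω := integral_map hX aestronglyMeasurable_id
  have hcdf : ∀ x, cdf ν x = F x := fun x => (cdf_map_eq_toReal hX x).trans (hF x).symm
  have hDν : D = cumulativeTsallisEntropy ν := by
    funext s
    by_cases hs : s = 0
    · simp [hs, hD0, cumulativeTsallisEntropy, tsallisIntegrand, hcdf]
    · simp [hD s hs, cumulativeTsallisEntropy, tsallisIntegrand, hs, hcdf]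
  subst hDν
  refine ⟨(antitone_cumulativeTsallisEntropy ν).antitoneOn _,
    tendsto_cumulativeTsallisEntropy_atTop ν hν, fun m hm => ?_, fun hunb => ?_⟩
  · rw [← hmean, ← cumulativeTsallisEntropy_neg_one_of_isGreatest ν hν (by simpa [hlaw] using hm)]
    exact tendsto_cumulativeTsallisEntropy_nhdsGT ν (by norm_num)
  · rw [← cumulativeTsallisEntropy_neg_one_eq_top ν (by simpa [hlaw] using hunb)]
    exact tendsto_cumulativeTsallisEntropy_nhdsGT ν (by norm_num)

/-- For an integrable real random variable `X` with continuous cdf `F`,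
the mapping `s ↦ Δ_s(X)` is nonincreasing on `(−1,∞)` (with values in `[0,∞]`),
`Δ_s(X) → 0` as `s → ∞`, and `Δ_s(X) → E[X] − ess inf X` as `s → −1⁺`,
the limit being `+∞` when `X` is not essentially bounded below. -/
theorem cumulative_tsallis_entropy_monotone_and_limits
    {Ω : Type*} [MeasureSpace Ω] [IsProbabilityMeasure (volume : Measure Ω)]
    (X : Ω → ℝ) (hXm : Measurable X) (hXint : Integrable X)
    (F : ℝ → ℝ) (hF : ∀ x, F x = ((volume : Measure Ω) {ω | X ω ≤ x}).toReal)
    (hFcont : Continuous F)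
    (D : ℝ → ℝ≥0∞)
    (hD0 : D 0 = ∫⁻ x : ℝ, ENNReal.ofReal (-(F x * Real.log (F x))))
    (hD : ∀ s : ℝ, s ≠ 0 → D s = ∫⁻ x : ℝ, ENNReal.ofReal ((1 / s) * (F x * (1 - F x ^ s)))) :
    AntitoneOn D (Ioi (-1 : ℝ))
    ∧ Tendsto D atTop (nhds 0)
    ∧ (∀ m : ℝ, IsGreatest {c : ℝ | ∀ᵐ ω ∂(volume : Measure Ω), c ≤ X ω} m →
        Tendsto D (nhdsWithin (-1 : ℝ) (Ioi (-1 : ℝ)))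
          (nhds (ENNReal.ofReal ((∫ ω, X ω ∂(volume : Measure Ω)) - m))))
    ∧ ((¬ ∃ c : ℝ, ∀ᵐ ω ∂(volume : Measure Ω), c ≤ X ω) →
        Tendsto D (nhdsWithin (-1 : ℝ) (Ioi (-1 : ℝ))) (nhds ⊤)) :=
  cumulative_tsallis_entropy_monotone_and_limits_general X hXint F hF D hD0 hD
end

section
/- Let X be a real random variable with finite expectation and continuous cumulative distribution function F such that Δ_0(X) < ∞ and Δ̄_0(X) < ∞, and define ϱ(X) = inf{s > −1 : ∇_s(X)/Δ̄_s(X) > 1} and ϱ̄(X) = inf{s > −1 : ∇̄_s(X)/Δ_s(X) > 1}. If Δ_0(X) > Δ̄_0(X), then −1 < ϱ(X) ≤ 0 < ϱ̄(X) < 1; if Δ_0(X) < Δ̄_0(X), then −1 < ϱ̄(X) ≤ 0 < ϱ(X) < 1. -/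
/-!
By Tonelli's theorem and the probability integral transform (`F(X)` is uniform on `[0, 1]` when
`F` is continuous), `∇_s(X) = ∫ F(x) ∫_{F(x)}^1 w_s(u)/u du dx`. At `s = 0` this is `Δ_0(X)`; at
`s = 1` it is `∫ F (F - 1 - 2 log F)`, which strictly exceeds `Δ_1(X) = ∫ F (1 - F) = Δ̄_1(X)`
because `log v < v - 1` on `(0, 1)`. In `s`, `Δ_s` decreases while `∇_s` increases and tends to
`0` as `s → -1`, and dominated convergence makes both continuous where needed.

If `Δ_0 > Δ̄_0`, then `∇_0 = Δ_0 > Δ̄_0` gives `ϱ ≤ 0`, and `∇_s → 0 < Δ̄_0 ≤ Δ̄_s` gives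
`ϱ > -1`. Likewise `∇̄_0 = Δ̄_0 < Δ_0` and continuity at `0` give `ϱ̄ > 0`, while
`∇̄_1 > Δ̄_1 = Δ_1` and continuity at `1` give `ϱ̄ < 1`. The second case is the first one for
`-X`, whose pair `(Δ, ∇)` is the pair `(Δ̄, ∇̄)` of `X`.
-/
open MeasureTheory Set
open scoped ENNReal

/-- The integrand `t ↦ (1/s) t (1 − t^s)` of the cumulative Tsallis entropy, with the
convention `(1 − t^0)/0 = −log t` at `s = 0`. -/
noncomputable def tsallisFn (s t : ℝ) : ℝ :=
  if s = 0 then -(t * Real.log t) else (1 / s) * (t * (1 - t ^ s))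

open Filter Topology ProbabilityTheory

lemma tsallisFn_zero_right (s : ℝ) : tsallisFn s 0 = 0 := by
  unfold tsallisFn; split_ifs <;> simp

lemma tsallisFn_one_left (t : ℝ) : tsallisFn 1 t = t * (1 - t) := by
  simp [tsallisFn]

lemma tsallisFn_one_le {v : ℝ} (h0 : 0 ≤ v) :
    tsallisFn 1 v ≤ v * (v - 1 - 2 * Real.log v) := by
  rcases h0.eq_or_lt with rfl | hv
  · simp [tsallisFn_zero_right]
  rw [tsallisFn_one_left]
  nlinarith [Real.log_le_sub_one_of_pos hv]

lemma tsallisFn_one_lt {v : ℝ} (h0 : 0 < v) (h1 : v < 1) :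
    tsallisFn 1 v < v * (v - 1 - 2 * Real.log v) := by
  rw [tsallisFn_one_left]
  nlinarith [Real.log_lt_sub_one_of_pos h0 h1.ne]

lemma tsallisFn_eq_mul_integral {t : ℝ} (ht : 0 < t) (s : ℝ) :
    tsallisFn s t = t * ∫ u in t..1, u ^ (s - 1) := by
  have h0 : (0 : ℝ) ∉ uIcc t 1 := notMem_uIcc_of_lt ht one_pos
  rcases eq_or_ne s 0 with rfl | hs
  · have hinv : EqOn (fun u : ℝ => u ^ ((0 : ℝ) - 1)) (fun u => u⁻¹) (uIcc t 1) := fun u _ => by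
      simp [Real.rpow_neg_one]
    rw [tsallisFn, if_pos rfl, intervalIntegral.integral_congr hinv, integral_inv h0, one_div,
      Real.log_inv]
    ring
  · rw [tsallisFn, if_neg hs, integral_rpow (Or.inr ⟨by contrapose! hs; linarith, h0⟩),
      sub_add_cancel, Real.one_rpow]
    ring

lemma tsallisFn_nonneg (s : ℝ) {t : ℝ} (h0 : 0 ≤ t) (h1 : t ≤ 1) : 0 ≤ tsallisFn s t := by
  rcases h0.eq_or_lt with rfl | ht
  · rw [tsallisFn_zero_right]
  · rw [tsallisFn_eq_mul_integral ht]
    exact mul_nonneg ht.le (intervalIntegral.integral_nonneg h1 fun u hu =>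
      Real.rpow_nonneg (ht.le.trans hu.1) _)

lemma antitone_tsallisFn {t : ℝ} (h0 : 0 ≤ t) (h1 : t ≤ 1) : Antitone (tsallisFn · t) := by
  intro s s' hss'
  rcases h0.eq_or_lt with rfl | ht
  · simp only [tsallisFn_zero_right, le_refl]
  have hint : ∀ r : ℝ, IntervalIntegrable (fun u : ℝ => u ^ (r - 1)) volume t 1 := fun r =>
    intervalIntegral.intervalIntegrable_rpow (Or.inr (notMem_uIcc_of_lt ht one_pos))
  simp only [tsallisFn_eq_mul_integral ht]
  exact mul_le_mul_of_nonneg_left (intervalIntegral.integral_mono_on h1 (hint s') (hint s)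
    fun u hu => Real.rpow_le_rpow_of_exponent_ge (ht.trans_le hu.1) hu.2 (by linarith)) ht.le

lemma tsallisFn_eq_mul_dslope {t : ℝ} (ht : 0 < t) (s : ℝ) :
    tsallisFn s t = t * dslope (fun r => 1 - t ^ r) 0 s := by
  rcases eq_or_ne s 0 with rfl | hs
  · rw [dslope_same, ((Real.hasStrictDerivAt_const_rpow ht 0).hasDerivAt.const_sub 1).deriv,
      tsallisFn, if_pos rfl, Real.rpow_zero]
    ring
  · rw [dslope_of_ne _ hs, slope_def_field, tsallisFn, if_neg hs, Real.rpow_zero]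
    ring

lemma continuous_tsallisFn {t : ℝ} (h0 : 0 ≤ t) : Continuous (tsallisFn · t) := by
  rcases h0.eq_or_lt with rfl | ht
  · simp only [tsallisFn_zero_right]
    exact continuous_const
  have hrpow : Differentiable ℝ fun r : ℝ => 1 - t ^ r := fun r =>
    ((Real.hasStrictDerivAt_const_rpow ht r).hasDerivAt.const_sub 1).differentiableAt
  simp only [tsallisFn_eq_mul_dslope ht]
  exact continuous_const.mul (continuousOn_univ.1
    ((continuousOn_dslope univ_mem).2 ⟨hrpow.continuous.continuousOn, hrpow 0⟩))

@[fun_prop]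
lemma measurable_tsallisFn (s : ℝ) : Measurable (tsallisFn s) := by
  unfold tsallisFn
  split_ifs <;> fun_prop

noncomputable def dualWeight (s v : ℝ) : ℝ := (1 - (1 - v) ^ (s + 1)) / v

@[fun_prop]
lemma measurable_dualWeight (s : ℝ) : Measurable (dualWeight s) := by
  unfold dualWeight
  fun_prop

lemma dualWeight_neg_one (v : ℝ) : dualWeight (-1) v = 0 := by
  simp [dualWeight]

lemma dualWeight_nonneg {s v : ℝ} (hs : -1 ≤ s) (h0 : 0 ≤ v) (h1 : v ≤ 1) :
    0 ≤ dualWeight s v :=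
  div_nonneg (sub_nonneg.2 (Real.rpow_le_one (by linarith) (by linarith) (by linarith))) h0

lemma dualWeight_mono {s s' v : ℝ} (hs : -1 ≤ s) (hss' : s ≤ s') (h0 : 0 ≤ v) (h1 : v ≤ 1) :
    dualWeight s v ≤ dualWeight s' v :=
  div_le_div_of_nonneg_right (sub_le_sub_left (Real.rpow_le_rpow_of_exponent_ge' (by linarith)
    (by linarith) (by linarith) (by linarith)) 1) h0

lemma dualWeight_one_le {v : ℝ} (h0 : 0 ≤ v) : dualWeight 1 v ≤ 2 * dualWeight 0 v := by
  rcases h0.eq_or_lt with rfl | hv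
  · simp [dualWeight]
  · have h1 : dualWeight 1 v = 2 - v := by
      rw [dualWeight, one_add_one_eq_two, Real.rpow_two]
      field_simp
      ring
    have h0 : dualWeight 0 v = 1 := by
      rw [dualWeight, zero_add, Real.rpow_one, sub_sub_cancel, div_self hv.ne']
    linarith

lemma continuousAt_dualWeight {σ v : ℝ} (h : v ≠ 1 ∨ σ ≠ -1) :
    ContinuousAt (dualWeight · v) σ := by
  have hpow : ContinuousAt (fun s : ℝ => (1 - v) ^ (s + 1)) σ := by
    rcases h with h | h
    · exact (Real.continuousAt_const_rpow (sub_ne_zero.2 h.symm)).comp (by fun_prop)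
    · exact (Real.continuousAt_const_rpow' (by contrapose! h; linarith)).comp (by fun_prop)
  exact (continuousAt_const.sub hpow).div_const v

section LIntegral

variable {α : Type*} [MeasurableSpace α] {μ : Measure α} {G m : α → ℝ}

lemma antitone_lintegral_tsallisFn (hG : ∀ x, G x ∈ Icc 0 1) :
    Antitone fun s => ∫⁻ x, ENNReal.ofReal (tsallisFn s (G x)) ∂μ :=
  fun _ _ hss' => lintegral_mono fun x =>
    ENNReal.ofReal_le_ofReal (antitone_tsallisFn (hG x).1 (hG x).2 hss')

lemma continuousOn_lintegral_tsallisFn (hGm : Measurable G) (hG : ∀ x, G x ∈ Icc 0 1)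
    (hfin : ∫⁻ x, ENNReal.ofReal (tsallisFn 0 (G x)) ∂μ ≠ ⊤) :
    ContinuousOn (fun s => ∫⁻ x, ENNReal.ofReal (tsallisFn s (G x)) ∂μ) (Ici 0) := by
  intro σ _
  refine tendsto_lintegral_filter_of_dominated_convergence _
    (Eventually.of_forall fun s => by fun_prop)
    (eventually_nhdsWithin_of_forall fun s (hs : 0 ≤ s) => ae_of_all _ fun x =>
      ENNReal.ofReal_le_ofReal (antitone_tsallisFn (hG x).1 (hG x).2 hs)) hfin
    (ae_of_all _ fun x => ?_)
  exact (ENNReal.continuous_ofReal.tendsto _).comp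
    ((continuous_tsallisFn (hG x).1).continuousAt.tendsto.mono_left nhdsWithin_le_nhds)

lemma monotoneOn_lintegral_dualWeight (hG : ∀ t, G t ∈ Icc 0 1) (hm : ∀ t, 0 ≤ m t) :
    MonotoneOn (fun s => ∫⁻ t, ENNReal.ofReal (dualWeight s (G t) * m t) ∂μ) (Ici (-1)) :=
  fun _ hs _ _ hss' => lintegral_mono fun t => ENNReal.ofReal_le_ofReal <|
    mul_le_mul_of_nonneg_right (dualWeight_mono hs hss' (hG t).1 (hG t).2) (hm t)

lemma continuousOn_lintegral_dualWeight (hGm : Measurable G) (hmm : Measurable m)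
    (hG : ∀ t, G t ∈ Icc 0 1) (hm : ∀ t, 0 ≤ m t) (hG1 : ∀ᵐ t ∂μ, G t ≠ 1)
    (hfin : ∫⁻ t, ENNReal.ofReal (dualWeight 0 (G t) * m t) ∂μ ≠ ⊤) :
    ContinuousOn (fun s => ∫⁻ t, ENNReal.ofReal (dualWeight s (G t) * m t) ∂μ) (Icc (-1) 1) := by
  intro σ _
  have hbound : ∀ s ∈ Icc (-1 : ℝ) 1, ∀ t,
      ENNReal.ofReal (dualWeight s (G t) * m t)
        ≤ ENNReal.ofReal 2 * ENNReal.ofReal (dualWeight 0 (G t) * m t) := fun s hs t => by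
    rw [← ENNReal.ofReal_mul zero_le_two, ← mul_assoc]
    exact ENNReal.ofReal_le_ofReal (mul_le_mul_of_nonneg_right
      ((dualWeight_mono hs.1 hs.2 (hG t).1 (hG t).2).trans (dualWeight_one_le (hG t).1)) (hm t))
  refine tendsto_lintegral_filter_of_dominated_convergence _
    (Eventually.of_forall fun s => by fun_prop)
    (eventually_nhdsWithin_of_forall fun s hs => ae_of_all _ (hbound s hs))
    (by rw [lintegral_const_mul' _ _ ENNReal.ofReal_ne_top]
        exact ENNReal.mul_ne_top ENNReal.ofReal_ne_top hfin) ?_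
  filter_upwards [hG1] with t ht
  exact (ENNReal.continuous_ofReal.tendsto _).comp
    (((continuousAt_dualWeight (Or.inl ht)).tendsto.mul_const (m t)).mono_left nhdsWithin_le_nhds)

end LIntegral

section Skewness

noncomputable def skewnessParam (N D : ℝ → ℝ≥0∞) : ℝ := sInf {s | -1 < s ∧ 1 < N s / D s}

lemma ENNReal.one_lt_div_iff_lt {a b : ℝ≥0∞} : 1 < a / b ↔ b < a := by
  rw [ENNReal.lt_div_iff_mul_lt (Or.inr ENNReal.one_ne_top) (Or.inr one_ne_zero), one_mul]

variable {Δ Δ' N N' : ℝ → ℝ≥0∞}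

lemma skewnessParam_le {a : ℝ} (ha : -1 < a) (h : Δ a < N a) : skewnessParam N Δ ≤ a :=
  csInf_le ⟨-1, fun _ hs => hs.1.le⟩ ⟨ha, ENNReal.one_lt_div_iff_lt.2 h⟩

lemma le_skewnessParam (hN : MonotoneOn N (Ici (-1))) (hΔ : Antitone Δ) {a b : ℝ} (ha : -1 < a)
    (h : N a < Δ a) (hb : -1 < b) (hb' : Δ b < N b) : a ≤ skewnessParam N Δ := by
  refine le_csInf ⟨b, hb, ENNReal.one_lt_div_iff_lt.2 hb'⟩ fun s ⟨hs, hsΔ⟩ =>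
    le_of_not_gt fun hsa => ?_
  exact (ENNReal.one_lt_div_iff_lt.1 hsΔ).not_ge <|
    (hN (mem_Ici.2 hs.le) (mem_Ici.2 ha.le) hsa.le).trans (h.le.trans (hΔ hsa.le))

-- Satisfied by `(Δ_s(X), ∇_s(X))` and by `(Δ̄_s(X), ∇̄_s(X))` as functions of `s`.
structure IsTsallisPair (Δ N : ℝ → ℝ≥0∞) : Prop where
  antitone : Antitone Δ
  zero_pos : 0 < Δ 0
  continuousOn : ContinuousOn Δ (Icc 0 1)
  monotoneOn_dual : MonotoneOn N (Ici (-1))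
  continuousOn_dual : ContinuousOn N (Icc (-1) 1)
  dual_neg_one : N (-1) = 0
  dual_zero : N 0 = Δ 0
  lt_dual_one : Δ 1 < N 1

lemma IsTsallisPair.skewnessParam_mem_Ioc (hP : IsTsallisPair Δ N) (hQ : IsTsallisPair Δ' N')
    (hlt : Δ' 0 < Δ 0) : skewnessParam N Δ' ∈ Ioc (-1) 0 := by
  have h0 : Δ' 0 < N 0 := hP.dual_zero ▸ hlt
  have hlim : Tendsto N (𝓝[Ioc (-1) 0] (-1)) (𝓝 0) := hP.dual_neg_one ▸
    (hP.continuousOn_dual (-1) (by norm_num)).mono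
      (Ioc_subset_Icc_self.trans (Icc_subset_Icc_right zero_le_one))
  have := left_nhdsWithin_Ioc_neBot (show (-1 : ℝ) < 0 by norm_num)
  obtain ⟨a, haN, ha⟩ := ((hlim.eventually_lt_const hQ.zero_pos).and self_mem_nhdsWithin).exists
  exact ⟨ha.1.trans_le (le_skewnessParam hP.monotoneOn_dual hQ.antitone ha.1
    (haN.trans_le (hQ.antitone ha.2)) (by norm_num) h0), skewnessParam_le (by norm_num) h0⟩

lemma IsTsallisPair.skewnessParam_mem_Ioo (hP : IsTsallisPair Δ N) (hQ : IsTsallisPair Δ' N')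
    (h1 : Δ 1 = Δ' 1) (hlt : Δ' 0 < Δ 0) : skewnessParam N' Δ ∈ Ioo 0 1 := by
  have hΔ1 : Tendsto Δ (𝓝[Ico 0 1] 1) (𝓝 (Δ 1)) :=
    (hP.continuousOn 1 (by norm_num)).mono Ico_subset_Icc_self
  have hN1 : Tendsto N' (𝓝[Ico 0 1] 1) (𝓝 (N' 1)) :=
    (hQ.continuousOn_dual 1 (by norm_num)).mono (Ico_subset_Icc_self.trans
      (Icc_subset_Icc_left (by norm_num)))
  have hΔ0 : Tendsto Δ (𝓝[Ioc 0 1] 0) (𝓝 (Δ 0)) :=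
    (hP.continuousOn 0 (by norm_num)).mono Ioc_subset_Icc_self
  have hN0 : Tendsto N' (𝓝[Ioc 0 1] 0) (𝓝 (N' 0)) :=
    (hQ.continuousOn_dual 0 (by norm_num)).mono (Ioc_subset_Icc_self.trans
      (Icc_subset_Icc_left (by norm_num)))
  have := right_nhdsWithin_Ico_neBot (show (0 : ℝ) < 1 by norm_num)
  have := left_nhdsWithin_Ioc_neBot (show (0 : ℝ) < 1 by norm_num)
  obtain ⟨b, hbN, hb⟩ :=
    ((hΔ1.eventually_lt hN1 (h1 ▸ hQ.lt_dual_one)).and self_mem_nhdsWithin).exists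
  obtain ⟨a, haN, ha⟩ :=
    ((hN0.eventually_lt hΔ0 (hQ.dual_zero ▸ hlt)).and self_mem_nhdsWithin).exists
  have hb1 : -1 < b := by linarith [hb.1]
  exact ⟨ha.1.trans_le (le_skewnessParam hQ.monotoneOn_dual hP.antitone (by linarith [ha.1]) haN
    hb1 hbN), (skewnessParam_le hb1 hbN).trans_lt hb.2⟩

lemma IsTsallisPair.skewnessParam_bounds (hP : IsTsallisPair Δ N) (hQ : IsTsallisPair Δ' N')
    (h1 : Δ 1 = Δ' 1) (hlt : Δ' 0 < Δ 0) :
    -1 < skewnessParam N Δ' ∧ skewnessParam N Δ' ≤ 0 ∧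
      0 < skewnessParam N' Δ ∧ skewnessParam N' Δ < 1 :=
  ⟨(hP.skewnessParam_mem_Ioc hQ hlt).1, (hP.skewnessParam_mem_Ioc hQ hlt).2,
    (hP.skewnessParam_mem_Ioo hQ h1 hlt).1, (hP.skewnessParam_mem_Ioo hQ h1 hlt).2⟩

end Skewness

lemma lintegral_mul_setLIntegral_Iic_comm {μ ν : Measure ℝ} [SFinite μ] [SFinite ν]
    {f g : ℝ → ℝ≥0∞} (hf : Measurable f) (hg : Measurable g) :
    ∫⁻ t, g t * ∫⁻ x in Iic t, f x ∂ν ∂μ = ∫⁻ x, f x * ∫⁻ t in Ici x, g t ∂μ ∂ν := by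
  have hswap : ∀ t x, g t * (Iic t).indicator f x = f x * (Ici x).indicator g t := fun t x => by
    by_cases h : x ≤ t <;> simp [indicator, h, mul_comm]
  have hmeas : Measurable (Function.uncurry fun t x => g t * (Iic t).indicator f x) :=
    (hg.comp measurable_fst).mul
      ((hf.comp measurable_snd).indicator (measurableSet_le measurable_snd measurable_fst))
  calc ∫⁻ t, g t * ∫⁻ x in Iic t, f x ∂ν ∂μ
      = ∫⁻ t, ∫⁻ x, g t * (Iic t).indicator f x ∂ν ∂μ := by
        simp_rw [lintegral_const_mul _ (hf.indicator measurableSet_Iic),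
          lintegral_indicator measurableSet_Iic]
    _ = ∫⁻ x, ∫⁻ t, f x * (Ici x).indicator g t ∂μ ∂ν := by
        simp_rw [← hswap]
        exact lintegral_lintegral_swap hmeas.aemeasurable
    _ = ∫⁻ x, f x * ∫⁻ t in Ici x, g t ∂μ ∂ν := by
        simp_rw [lintegral_const_mul _ (hg.indicator measurableSet_Ici),
          lintegral_indicator measurableSet_Ici]

lemma lintegral_Icc_ofReal_eq_sub {f f' : ℝ → ℝ} {a b : ℝ} (hab : a ≤ b)
    (hf : ∀ x ∈ Icc a b, HasDerivAt f (f' x) x) (hf' : ContinuousOn f' (Icc a b))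
    (hf'0 : ∀ x ∈ Icc a b, 0 ≤ f' x) :
    ∫⁻ x in Icc a b, ENNReal.ofReal (f' x) = ENNReal.ofReal (f b - f a) := by
  rw [← ofReal_integral_eq_lintegral_ofReal hf'.integrableOn_Icc
      (ae_restrict_of_forall_mem measurableSet_Icc hf'0), integral_Icc_eq_integral_Ioc,
    ← intervalIntegral.integral_of_le hab, intervalIntegral.integral_eq_sub_of_hasDerivAt
      (uIcc_of_le hab ▸ hf) (hf'.intervalIntegrable_of_Icc hab)]

noncomputable def meanInactivityTime (F : ℝ → ℝ) (t : ℝ) : ℝ :=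
  if 0 < F t then (∫ x in Iic t, F x) / F t else 0

noncomputable def meanResidualLife (Fbar : ℝ → ℝ) (t : ℝ) : ℝ :=
  if 0 < Fbar t then (∫ x in Ioi t, Fbar x) / Fbar t else 0

lemma meanInactivityTime_nonneg {F : ℝ → ℝ} (hF : ∀ x, 0 ≤ F x) (t : ℝ) :
    0 ≤ meanInactivityTime F t := by
  unfold meanInactivityTime
  split_ifs with ht
  · exact div_nonneg (setIntegral_nonneg measurableSet_Iic fun x _ => hF x) ht.le
  · exact le_rfl

lemma cdf_mem_Icc (μ : Measure ℝ) (x : ℝ) : cdf μ x ∈ Icc 0 1 := ⟨cdf_nonneg μ x, cdf_le_one μ x⟩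

section CDF

variable {μ : Measure ℝ}

lemma volume_cdf_preimage_Ioo_ne_zero (hμ : Continuous (cdf μ)) :
    volume (cdf μ ⁻¹' Ioo 0 1) ≠ 0 := by
  obtain ⟨x, hx⟩ : (1 / 2 : ℝ) ∈ range (cdf μ) := mem_range_of_exists_le_of_exists_ge hμ
    (((tendsto_cdf_atBot μ).eventually_lt_const (by norm_num)).exists.imp fun _ h => h.le)
    (((tendsto_cdf_atTop μ).eventually_const_lt (by norm_num)).exists.imp fun _ h => h.le)
  refine ((isOpen_Ioo.preimage hμ).measure_pos volume ⟨x, ?_⟩).ne'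
  rw [mem_preimage, hx]
  norm_num

lemma lintegral_tsallisFn_zero_cdf_pos (hμ : Continuous (cdf μ)) :
    0 < ∫⁻ x, ENNReal.ofReal (tsallisFn 0 (cdf μ x)) := by
  have h := lintegral_strict_mono_of_ae_le_of_ae_lt_on (f := 0)
    (g := fun x => ENNReal.ofReal (tsallisFn 0 (cdf μ x)))
    (by fun_prop) (by simp)
    (ae_of_all _ fun _ => zero_le) (volume_cdf_preimage_Ioo_ne_zero hμ)
    (ae_of_all _ fun x (hx : cdf μ x ∈ Ioo 0 1) => ENNReal.ofReal_pos.2 <| by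
      rw [tsallisFn, if_pos rfl, neg_pos]
      exact mul_neg_of_pos_of_neg hx.1 (Real.log_neg hx.1 hx.2))
  simpa using h

lemma lintegral_tsallisFn_one_cdf_lt (hμ : Continuous (cdf μ))
    (hfin : ∫⁻ x, ENNReal.ofReal (tsallisFn 0 (cdf μ x)) ≠ ⊤) :
    ∫⁻ x, ENNReal.ofReal (tsallisFn 1 (cdf μ x))
      < ∫⁻ x, ENNReal.ofReal (cdf μ x * (cdf μ x - 1 - 2 * Real.log (cdf μ x))) :=
  lintegral_strict_mono_of_ae_le_of_ae_lt_on (by fun_prop)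
    (ne_top_of_le_ne_top hfin (antitone_lintegral_tsallisFn (cdf_mem_Icc μ) zero_le_one))
    (ae_of_all _ fun x => ENNReal.ofReal_le_ofReal (tsallisFn_one_le (cdf_nonneg μ x)))
    (volume_cdf_preimage_Ioo_ne_zero hμ)
    (ae_of_all _ fun x (hx : cdf μ x ∈ Ioo 0 1) =>
      (ENNReal.ofReal_lt_ofReal_iff_of_nonneg (tsallisFn_nonneg 1 hx.1.le hx.2.le)).2
        (tsallisFn_one_lt hx.1 hx.2))

lemma integrable_id_map_neg (hint : Integrable id μ) : Integrable id (μ.map Neg.neg) :=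
  (integrable_map_measure aestronglyMeasurable_id measurable_neg.aemeasurable).2 hint.neg

variable [IsProbabilityMeasure μ]

lemma measure_cdf_preimage_Iic (hμ : Continuous (cdf μ)) {u : ℝ} (h0 : 0 ≤ u) (h1 : u < 1) :
    μ (cdf μ ⁻¹' Iic u) = ENNReal.ofReal u := by
  set S := cdf μ ⁻¹' Iic u
  rcases S.eq_empty_or_nonempty with hS | ⟨a, ha⟩
  · obtain rfl : 0 = u := by
      refine h0.eq_or_lt.resolve_right fun hu => ?_
      obtain ⟨a, ha⟩ := ((tendsto_cdf_atBot μ).eventually_lt_const hu).exists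
      exact hS.subset (show a ∈ S from ha.le)
    rw [hS, measure_empty, ENNReal.ofReal_zero]
  obtain ⟨M, hM⟩ := eventually_atTop.1 ((tendsto_cdf_atTop μ).eventually_const_lt h1)
  have hbdd : BddAbove S := ⟨M, fun x hx => le_of_not_gt fun hMx => (hM x hMx.le).not_ge hx⟩
  have hc : sSup S ∈ S := (isClosed_Iic.preimage hμ).csSup_mem ⟨a, ha⟩ hbdd
  have hSc : S = Iic (sSup S) :=
    Subset.antisymm (fun x hx => le_csSup hbdd hx) fun x hx => (monotone_cdf μ hx).trans hc
  obtain ⟨b, hb⟩ : u ∈ range (cdf μ) :=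
    mem_range_of_exists_le_of_exists_ge hμ ⟨a, ha⟩ ⟨M, (hM M le_rfl).le⟩
  have hub : cdf μ (sSup S) = u :=
    le_antisymm hc (hb ▸ monotone_cdf μ (le_csSup hbdd (show b ∈ S from hb.le)))
  rw [hSc, ← ofReal_cdf, hub]

lemma map_cdf_eq_restrict_Icc (hμ : Continuous (cdf μ)) :
    μ.map (cdf μ) = volume.restrict (Icc 0 1) := by
  refine Measure.ext_of_Iic _ _ fun u => ?_
  have hset : Iic u ∩ Icc 0 1 = Icc 0 (min u 1) := by
    ext x
    simp only [mem_inter_iff, mem_Iic, mem_Icc, le_min_iff]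
    tauto
  rw [Measure.map_apply hμ.measurable measurableSet_Iic, Measure.restrict_apply measurableSet_Iic,
    hset, Real.volume_Icc, sub_zero]
  rcases lt_or_ge u 0 with hu0 | hu0
  · have hS : cdf μ ⁻¹' Iic u = ∅ :=
      eq_empty_of_forall_notMem fun x hx => (hu0.trans_le (cdf_nonneg μ x)).not_ge hx
    rw [hS, measure_empty, ENNReal.ofReal_of_nonpos ((min_le_left u 1).trans hu0.le)]
  rcases lt_or_ge u 1 with hu1 | hu1
  · rw [measure_cdf_preimage_Iic hμ hu0 hu1, min_eq_left hu1.le]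
  · have hS : cdf μ ⁻¹' Iic u = univ :=
      eq_univ_of_forall fun x => (cdf_le_one μ x).trans hu1
    rw [hS, measure_univ, min_eq_right hu1, ENNReal.ofReal_one]

lemma measure_cdf_preimage_singleton (hμ : Continuous (cdf μ)) (c : ℝ) :
    μ (cdf μ ⁻¹' {c}) = 0 := by
  rw [← Measure.map_apply hμ.measurable (measurableSet_singleton c), map_cdf_eq_restrict_Icc hμ]
  exact nonpos_iff_eq_zero.1 ((Measure.restrict_apply_le _ _).trans_eq Real.volume_singleton)

lemma setLIntegral_Ici_comp_cdf (hμ : Continuous (cdf μ)) {φ : ℝ → ℝ≥0∞} (hφ : Measurable φ)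
    (x : ℝ) : ∫⁻ t in Ici x, φ (cdf μ t) ∂μ = ∫⁻ u in Icc (cdf μ x) 1, φ u := by
  have hae : Ici x =ᵐ[μ] cdf μ ⁻¹' Ici (cdf μ x) := by
    filter_upwards [measure_eq_zero_iff_ae_notMem.1 (measure_cdf_preimage_singleton hμ (cdf μ x))]
      with t ht
    refine propext ⟨fun hxt => monotone_cdf μ hxt, fun hxt => ?_⟩
    exact le_of_not_gt fun htx => ht (le_antisymm (monotone_cdf μ htx.le) hxt)
  rw [setLIntegral_congr hae, ← setLIntegral_map measurableSet_Ici hφ hμ.measurable,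
    map_cdf_eq_restrict_Icc hμ, Measure.restrict_restrict measurableSet_Ici, ← Ici_inter_Iic,
    ← inter_assoc, Ici_inter_Ici, max_eq_left (cdf_nonneg μ x), Ici_inter_Iic]

lemma integrableOn_cdf_Iic (hint : Integrable id μ) (t : ℝ) : IntegrableOn (cdf μ) (Iic t) := by
  refine ⟨(monotone_cdf μ).measurable.aestronglyMeasurable, ?_⟩
  rw [hasFiniteIntegral_iff_ofReal (ae_of_all _ (cdf_nonneg μ))]
  have htonelli := lintegral_mul_setLIntegral_Iic_comm (μ := volume.restrict (Iic t)) (ν := μ)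
    (f := 1) (g := 1) measurable_one measurable_one
  simp only [Pi.one_apply, one_mul, setLIntegral_one,
    Measure.restrict_apply measurableSet_Ici, Ici_inter_Iic, Real.volume_Icc] at htonelli
  simp_rw [ofReal_cdf, htonelli]
  exact ((integrable_const t).sub hint).lintegral_lt_top

lemma measurable_meanInactivityTime (hint : Integrable id μ) :
    Measurable (meanInactivityTime (cdf μ)) := by
  have hmono : Monotone fun t => ∫ x in Iic t, cdf μ x := fun a b hab =>
    setIntegral_mono_set (integrableOn_cdf_Iic hint b) (ae_of_all _ (cdf_nonneg μ))
      (Iic_subset_Iic.2 hab).eventuallyLE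
  have hF := (monotone_cdf μ).measurable
  exact Measurable.ite (measurableSet_lt measurable_const hF) (hmono.measurable.div hF)
    measurable_const

lemma lintegral_dualWeight_mul_meanInactivityTime (hμ : Continuous (cdf μ))
    (hint : Integrable id μ) {s : ℝ} (hs : -1 ≤ s) :
    ∫⁻ t, ENNReal.ofReal (dualWeight s (cdf μ t) * meanInactivityTime (cdf μ) t) ∂μ
      = ∫⁻ x, ENNReal.ofReal (cdf μ x)
          * ∫⁻ u in Icc (cdf μ x) 1, ENNReal.ofReal (dualWeight s u / u) := by
  have hF := hμ.measurable
  have hφ : Measurable fun u => ENNReal.ofReal (dualWeight s u / u) := by fun_prop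
  calc ∫⁻ t, ENNReal.ofReal (dualWeight s (cdf μ t) * meanInactivityTime (cdf μ) t) ∂μ
      = ∫⁻ t, ENNReal.ofReal (dualWeight s (cdf μ t) / cdf μ t)
          * (∫⁻ x in Iic t, ENNReal.ofReal (cdf μ x)) ∂μ := by
        refine lintegral_congr_ae ?_
        filter_upwards [measure_eq_zero_iff_ae_notMem.1 (measure_cdf_preimage_singleton hμ 0)]
          with t ht
        have hFt : 0 < cdf μ t := (cdf_nonneg μ t).lt_of_ne' ht
        rw [meanInactivityTime, if_pos hFt, ← ofReal_integral_eq_lintegral_ofReal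
          (integrableOn_cdf_Iic hint t) (ae_of_all _ (cdf_nonneg μ)), ← ENNReal.ofReal_mul
          (div_nonneg (dualWeight_nonneg hs (cdf_nonneg μ t) (cdf_le_one μ t)) hFt.le)]
        ring_nf
    _ = ∫⁻ x, ENNReal.ofReal (cdf μ x)
          * ∫⁻ t in Ici x, ENNReal.ofReal (dualWeight s (cdf μ t) / cdf μ t) ∂μ :=
        lintegral_mul_setLIntegral_Iic_comm (by fun_prop) (hφ.comp hF)
    _ = _ := by simp_rw [setLIntegral_Ici_comp_cdf hμ hφ]

lemma ofReal_mul_lintegral_dualWeight_zero {v : ℝ} (h0 : 0 ≤ v) (h1 : v ≤ 1) :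
    ENNReal.ofReal v * ∫⁻ u in Icc v 1, ENNReal.ofReal (dualWeight 0 u / u)
      = ENNReal.ofReal (tsallisFn 0 v) := by
  rcases h0.eq_or_lt with rfl | hv
  · simp [tsallisFn_zero_right]
  have hpos : ∀ u ∈ Icc v 1, 0 < u := fun u hu => hv.trans_le hu.1
  have hinv : EqOn (fun u => ENNReal.ofReal (dualWeight 0 u / u)) (fun u => ENNReal.ofReal u⁻¹)
      (Icc v 1) := fun u hu => by
    simp only [dualWeight, zero_add, Real.rpow_one, sub_sub_cancel, div_self (hpos u hu).ne',
      one_div]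
  rw [setLIntegral_congr_fun measurableSet_Icc hinv, lintegral_Icc_ofReal_eq_sub h1
      (fun u hu => Real.hasDerivAt_log (hpos u hu).ne')
      (continuousOn_inv₀.mono fun u hu => (hpos u hu).ne')
      (fun u hu => (inv_pos.2 (hpos u hu)).le), ← ENNReal.ofReal_mul hv.le, tsallisFn, if_pos rfl,
    Real.log_one]
  ring_nf

lemma ofReal_mul_lintegral_dualWeight_one {v : ℝ} (h0 : 0 ≤ v) (h1 : v ≤ 1) :
    ENNReal.ofReal v * ∫⁻ u in Icc v 1, ENNReal.ofReal (dualWeight 1 u / u)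
      = ENNReal.ofReal (v * (v - 1 - 2 * Real.log v)) := by
  rcases h0.eq_or_lt with rfl | hv
  · simp
  have hpos : ∀ u ∈ Icc v 1, 0 < u := fun u hu => hv.trans_le hu.1
  have hform : EqOn (fun u => ENNReal.ofReal (dualWeight 1 u / u))
      (fun u => ENNReal.ofReal (2 * u⁻¹ - 1)) (Icc v 1) := fun u hu => by
    have := (hpos u hu).ne'
    simp only [dualWeight, one_add_one_eq_two, Real.rpow_two]
    congr 1
    field_simp
    ring
  rw [setLIntegral_congr_fun measurableSet_Icc hform, lintegral_Icc_ofReal_eq_sub h1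
      (f := fun u => 2 * Real.log u - u)
      (fun u hu => ((Real.hasDerivAt_log (hpos u hu).ne').const_mul 2).sub (hasDerivAt_id u))
      ((continuousOn_const.mul (continuousOn_inv₀.mono fun u hu => (hpos u hu).ne')).sub
        continuousOn_const)
      (fun u hu => by
        have := (one_le_inv₀ (hpos u hu)).2 hu.2
        linarith), ← ENNReal.ofReal_mul hv.le, Real.log_one]
  ring_nf

lemma isTsallisPair_cdf (hμ : Continuous (cdf μ)) (hint : Integrable id μ)
    (hfin : ∫⁻ x, ENNReal.ofReal (tsallisFn 0 (cdf μ x)) ≠ ⊤) :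
    IsTsallisPair (fun s => ∫⁻ x, ENNReal.ofReal (tsallisFn s (cdf μ x)))
      (fun s => ∫⁻ t, ENNReal.ofReal
        (dualWeight s (cdf μ t) * meanInactivityTime (cdf μ) t) ∂μ) := by
  have dual_zero : ∫⁻ t, ENNReal.ofReal (dualWeight 0 (cdf μ t) * meanInactivityTime (cdf μ) t) ∂μ
      = ∫⁻ x, ENNReal.ofReal (tsallisFn 0 (cdf μ x)) := by
    rw [lintegral_dualWeight_mul_meanInactivityTime hμ hint (by norm_num)]
    simp_rw [ofReal_mul_lintegral_dualWeight_zero (cdf_nonneg μ _) (cdf_le_one μ _)]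
  refine ⟨antitone_lintegral_tsallisFn (cdf_mem_Icc μ), lintegral_tsallisFn_zero_cdf_pos hμ,
    (continuousOn_lintegral_tsallisFn hμ.measurable (cdf_mem_Icc μ) hfin).mono Icc_subset_Ici_self,
    monotoneOn_lintegral_dualWeight (cdf_mem_Icc μ) (meanInactivityTime_nonneg (cdf_nonneg μ)),
    continuousOn_lintegral_dualWeight hμ.measurable (measurable_meanInactivityTime hint)
      (cdf_mem_Icc μ) (meanInactivityTime_nonneg (cdf_nonneg μ))
      (measure_eq_zero_iff_ae_notMem.1 (measure_cdf_preimage_singleton hμ 1)) (dual_zero ▸ hfin),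
    by simp [dualWeight_neg_one], dual_zero, ?_⟩
  rw [lintegral_dualWeight_mul_meanInactivityTime hμ hint (by norm_num)]
  simp_rw [ofReal_mul_lintegral_dualWeight_one (cdf_nonneg μ _) (cdf_le_one μ _)]
  exact lintegral_tsallisFn_one_cdf_lt hμ hfin

lemma one_sub_cdf_eq_measureReal_Ioi (x : ℝ) : 1 - cdf μ x = μ.real (Ioi x) := by
  rw [← compl_Iic, measureReal_compl measurableSet_Iic, probReal_univ, cdf_eq_real]

instance isProbabilityMeasure_map_neg : IsProbabilityMeasure (μ.map Neg.neg) :=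
  Measure.isProbabilityMeasure_map measurable_neg.aemeasurable

lemma cdf_map_neg (hμ : Continuous (cdf μ)) (x : ℝ) :
    cdf (μ.map Neg.neg) x = 1 - cdf μ (-x) := by
  have hatom : μ {-x} = 0 :=
    measure_mono_null (fun y hy => congrArg (cdf μ) hy) (measure_cdf_preimage_singleton hμ _)
  rw [cdf_eq_real, map_measureReal_apply measurable_neg measurableSet_Iic, neg_preimage, neg_Iic,
    one_sub_cdf_eq_measureReal_Ioi, measureReal_congr (Ioi_ae_eq_Ici' hatom).symm]

lemma meanResidualLife_eq_meanInactivityTime_map_neg (hμ : Continuous (cdf μ)) (t : ℝ) :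
    meanResidualLife (1 - cdf μ ·) t = meanInactivityTime (cdf (μ.map Neg.neg)) (-t) := by
  simp only [meanResidualLife, meanInactivityTime, cdf_map_neg hμ, neg_neg,
    integral_comp_neg_Iic (-t) (1 - cdf μ ·)]

lemma measurable_meanResidualLife (hμ : Continuous (cdf μ)) (hint : Integrable id μ) :
    Measurable (meanResidualLife (1 - cdf μ ·)) := by
  simp only [funext (meanResidualLife_eq_meanInactivityTime_map_neg hμ)]
  exact (measurable_meanInactivityTime (integrable_id_map_neg hint)).comp measurable_neg

lemma isTsallisPair_survival (hμ : Continuous (cdf μ)) (hint : Integrable id μ)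
    (hfin : ∫⁻ x, ENNReal.ofReal (tsallisFn 0 (1 - cdf μ x)) ≠ ⊤) :
    IsTsallisPair (fun s => ∫⁻ x, ENNReal.ofReal (tsallisFn s (1 - cdf μ x)))
      (fun s => ∫⁻ t, ENNReal.ofReal
        (dualWeight s (1 - cdf μ t) * meanResidualLife (1 - cdf μ ·) t) ∂μ) := by
  have hν : Continuous (cdf (μ.map Neg.neg)) := by
    rw [show ⇑(cdf (μ.map Neg.neg)) = fun x => 1 - cdf μ (-x) from funext (cdf_map_neg hμ)]
    exact continuous_const.sub (hμ.comp continuous_neg)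
  have hνint := integrable_id_map_neg hint
  have hΔ : ∀ s, ∫⁻ x, ENNReal.ofReal (tsallisFn s (cdf (μ.map Neg.neg) x))
      = ∫⁻ x, ENNReal.ofReal (tsallisFn s (1 - cdf μ x)) := fun s => by
    simp only [cdf_map_neg hμ]
    exact lintegral_neg_eq_self fun x => ENNReal.ofReal (tsallisFn s (1 - cdf μ x))
  have hN : ∀ s, ∫⁻ t, ENNReal.ofReal (dualWeight s (cdf (μ.map Neg.neg) t)
        * meanInactivityTime (cdf (μ.map Neg.neg)) t) ∂(μ.map Neg.neg)
      = ∫⁻ t, ENNReal.ofReal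
          (dualWeight s (1 - cdf μ t) * meanResidualLife (1 - cdf μ ·) t) ∂μ := fun s => by
    rw [lintegral_map (by have := measurable_meanInactivityTime hνint; fun_prop) measurable_neg]
    simp only [cdf_map_neg hμ, neg_neg, meanResidualLife_eq_meanInactivityTime_map_neg hμ]
  simpa only [hΔ, hN] using isTsallisPair_cdf hν hνint (by rwa [hΔ])

end CDF

/-- For an integrable real random variable `X` with continuous cdf and
finite `Δ_0(X)`, `Δ̄_0(X)`, the skewness parameters
`ϱ(X) = inf{s > −1 : ∇_s(X)/Δ̄_s(X) > 1}` and `ϱ̄(X) = inf{s > −1 : ∇̄_s(X)/Δ_s(X) > 1}`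
satisfy: if `Δ_0(X) > Δ̄_0(X)` then `−1 < ϱ(X) ≤ 0 < ϱ̄(X) < 1`, and if
`Δ_0(X) < Δ̄_0(X)` then `−1 < ϱ̄(X) ≤ 0 < ϱ(X) < 1`. -/
theorem skewness_parameters_range
    {Ω : Type*} [MeasureSpace Ω] [IsProbabilityMeasure (volume : Measure Ω)]
    (X : Ω → ℝ) (hXm : Measurable X) (hXint : Integrable X)
    (F Fb : ℝ → ℝ)
    (hF : ∀ x, F x = ((volume : Measure Ω) {ω | X ω ≤ x}).toReal)
    (hFb : ∀ x, Fb x = ((volume : Measure Ω) {ω | x < X ω}).toReal)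
    (hFcont : Continuous F)
    (mbar mrl : ℝ → ℝ)
    (hmbar : ∀ t, mbar t = if 0 < F t then (∫ x in Iic t, F x) / F t else 0)
    (hmrl : ∀ t, mrl t = if 0 < Fb t then (∫ x in Ioi t, Fb x) / Fb t else 0)
    (Δ Δb Nab Nabb : ℝ → ℝ≥0∞)
    (hΔ : ∀ s : ℝ, Δ s = ∫⁻ x : ℝ, ENNReal.ofReal (tsallisFn s (F x)))
    (hΔb : ∀ s : ℝ, Δb s = ∫⁻ x : ℝ, ENNReal.ofReal (tsallisFn s (Fb x)))
    (hNab : ∀ s : ℝ, Nab s = ∫⁻ ω, ENNReal.ofReal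
        (((1 - (1 - F (X ω)) ^ (s + 1)) / F (X ω)) * mbar (X ω)) ∂(volume : Measure Ω))
    (hNabb : ∀ s : ℝ, Nabb s = ∫⁻ ω, ENNReal.ofReal
        (((1 - (1 - Fb (X ω)) ^ (s + 1)) / Fb (X ω)) * mrl (X ω)) ∂(volume : Measure Ω))
    (hfin : Δ 0 < ⊤) (hfinb : Δb 0 < ⊤)
    (ρ ρb : ℝ)
    (hρ : ρ = sInf {s : ℝ | -1 < s ∧ 1 < Nab s / Δb s})
    (hρb : ρb = sInf {s : ℝ | -1 < s ∧ 1 < Nabb s / Δ s}) :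
    (Δb 0 < Δ 0 → -1 < ρ ∧ ρ ≤ 0 ∧ 0 < ρb ∧ ρb < 1)
    ∧ (Δ 0 < Δb 0 → -1 < ρb ∧ ρb ≤ 0 ∧ 0 < ρ ∧ ρ < 1) := by
  set μ := (volume : Measure Ω).map X
  have : IsProbabilityMeasure μ := Measure.isProbabilityMeasure_map hXm.aemeasurable
  have hint : Integrable id μ :=
    (integrable_map_measure aestronglyMeasurable_id hXm.aemeasurable).2 hXint
  obtain rfl : F = cdf μ := funext fun x => by
    rw [hF, cdf_eq_real, map_measureReal_apply hXm measurableSet_Iic]; rfl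
  obtain rfl : Fb = (1 - cdf μ ·) := funext fun x => by
    rw [hFb, one_sub_cdf_eq_measureReal_Ioi, map_measureReal_apply hXm measurableSet_Ioi]; rfl
  obtain rfl : mbar = meanInactivityTime (cdf μ) := funext hmbar
  obtain rfl : mrl = meanResidualLife (1 - cdf μ ·) := funext hmrl
  have hP := isTsallisPair_cdf hFcont hint (hΔ 0 ▸ hfin.ne)
  have hQ := isTsallisPair_survival hFcont hint (hΔb 0 ▸ hfinb.ne)
  obtain rfl : Δ = _ := funext hΔ
  obtain rfl : Δb = _ := funext hΔb
  obtain rfl : Nab = _ := funext fun s => (hNab s).trans (lintegral_map (f := fun t =>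
    ENNReal.ofReal (dualWeight s (cdf μ t) * meanInactivityTime (cdf μ) t))
    (by have := measurable_meanInactivityTime hint; fun_prop) hXm).symm
  obtain rfl : Nabb = _ := funext fun s => (hNabb s).trans (lintegral_map (f := fun t =>
    ENNReal.ofReal (dualWeight s (1 - cdf μ t) * meanResidualLife (1 - cdf μ ·) t))
    (by have := measurable_meanResidualLife hFcont hint; fun_prop) hXm).symm
  have h1 : ∫⁻ x, ENNReal.ofReal (tsallisFn 1 (cdf μ x))
      = ∫⁻ x, ENNReal.ofReal (tsallisFn 1 (1 - cdf μ x)) := by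
    simp only [tsallisFn_one_left, sub_sub_cancel, mul_comm]
  subst hρ hρb
  exact ⟨fun h => hP.skewnessParam_bounds hQ h1 h, fun h => hQ.skewnessParam_bounds hP h1.symm h⟩
end
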